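/- arXiv:2511.13531 — 5 statements merged into one kernel-verified Lean document; each statement's English description precedes it below -/
import Mathlib

section
/- Let G be a finite simple graph on a vertex type V, let d ≥ 1, let S be a realization of G in dimension d, and let w : V → ℝ be nonnegative weights. For each natural number k ≥ 1 define β(G,w,k) := sup over density matrices ρ (positive semidefinite complex d×d matrices of trace 1) of ∑_i w i * |tr(ρ * S i)|^k (each tr(ρ * S i) is real). Then as k → ∞ the values β(G,w,k) converge to the weighted independence number: lim_{k→∞} β(G,w,k) = α(G,w). -/
open Matrix
open scoped ComplexOrder

/-- A realization of the graph `G` in dimension `d`: a family of Hermitian involutions that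
anticommute on edges and commute on non-edges. -/
def IsRealization {V : Type*} (G : SimpleGraph V) (d : ℕ)
    (S : V → Matrix (Fin d) (Fin d) ℂ) : Prop :=
  (∀ i, (S i).IsHermitian) ∧ (∀ i, S i * S i = 1) ∧
    (∀ i j, G.Adj i j → S i * S j = -(S j * S i)) ∧
    (∀ i j, i ≠ j → ¬G.Adj i j → S i * S j = S j * S i)

/-- The (real) expectation value `ψᴴ A ψ` of a matrix `A` at a vector `ψ`. -/
noncomputable def expectation {d : ℕ} (A : Matrix (Fin d) (Fin d) ℂ) (ψ : Fin d → ℂ) : ℝ :=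
  (star ψ ⬝ᵥ (A *ᵥ ψ)).re

/-- The beta value of a realization: supremum over unit vectors of the weighted sum of squared
expectations. -/
noncomputable def betaVal {V : Type*} [Fintype V] {d : ℕ}
    (S : V → Matrix (Fin d) (Fin d) ℂ) (w : V → ℝ) : ℝ :=
  sSup {r : ℝ | ∃ ψ : Fin d → ℂ, star ψ ⬝ᵥ ψ = 1 ∧
    r = ∑ i, w i * (expectation (S i) ψ) ^ 2}

/-- A finite set of vertices is independent if no two of its members are adjacent. -/
def IsIndepSet {V : Type*} (G : SimpleGraph V) (I : Finset V) : Prop :=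
  ∀ a ∈ I, ∀ b ∈ I, ¬G.Adj a b

/-- The weighted independence number. -/
noncomputable def alphaW {V : Type*} [Fintype V] (G : SimpleGraph V) (w : V → ℝ) : ℝ :=
  sSup {r : ℝ | ∃ I : Finset V, IsIndepSet G I ∧ r = ∑ i ∈ I, w i}

/-- A graph is ħ-perfect if for every realization and every nonnegative weight vector the beta
value equals the weighted independence number. -/
def HbarPerfect {V : Type*} [Fintype V] (G : SimpleGraph V) : Prop :=
  ∀ d : ℕ, 1 ≤ d → ∀ S : V → Matrix (Fin d) (Fin d) ℂ, IsRealization G d S →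
    ∀ w : V → ℝ, (∀ i, 0 ≤ w i) → betaVal S w = alphaW G w

/-!
For a density matrix `ρ` and a Hermitian involution `C`, the matrix `D = 1 - C` satisfies
`D² = 2D`, so `0 ≤ tr(D ρ D) = 2 (1 - tr(ρ C))`: all expectations `x i = tr(ρ S i)` lie in
`[-1, 1]`. If `S i` and `S j` anticommute, every unit combination `a S i + b S j` is again a
Hermitian involution, whence `x i ^ 2 + x j ^ 2 ≤ 1` on edges. So the vertices with
`|x i| > 1/√2` are independent and `β(G, w, k) ≤ α(G, w) + (∑ i, w i) * (1/√2) ^ k`.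
Conversely, on an independent set the `S i` are commuting involutions, hence have a common
`±1`-eigenvector; its pure state has `|x i| = 1` there, so `α(G, w) ≤ β(G, w, k)`.
-/

namespace Matrix

variable {n : Type*} [Fintype n] [DecidableEq n]

theorem re_trace_mul_le_one_of_involutive {ρ C : Matrix n n ℂ} (hρ : ρ.PosSemidef)
    (hρ1 : ρ.trace = 1) (hC : C.IsHermitian) (hC2 : C * C = 1) :
    (ρ * C).trace.re ≤ 1 := by
  set D := 1 - C
  have hDh : Dᴴ = D := by simp [D, hC.eq]
  have hDD : D * D = 2 • D := by
    simp only [D, sub_mul, mul_sub, hC2, mul_one, one_mul, two_smul]; abel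
  have h := (Complex.le_def.mp (hρ.conjTranspose_mul_mul_same D).trace_nonneg).1
  rw [hDh, trace_mul_cycle, hDD, smul_mul_assoc, trace_smul, trace_mul_comm, mul_sub, mul_one,
    trace_sub, hρ1, Complex.smul_re, Complex.sub_re, Complex.one_re,
    Complex.zero_re, two_nsmul] at h
  linarith

theorem smul_add_smul_mul_self_of_anticomm {R : Type*} [CommRing R] {A B : Matrix n n R}
    (hA2 : A * A = 1) (hB2 : B * B = 1) (hAB : A * B = -(B * A)) (a b : R) :
    (a • A + b • B) * (a • A + b • B) = (a ^ 2 + b ^ 2) • (1 : Matrix n n R) := by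
  simp only [add_mul, mul_add, smul_mul_assoc, mul_smul_comm, hA2, hB2, hAB]
  module

theorem sq_add_sq_re_trace_le_one_of_anticomm {ρ A B : Matrix n n ℂ} (hρ : ρ.PosSemidef)
    (hρ1 : ρ.trace = 1) (hA : A.IsHermitian) (hB : B.IsHermitian)
    (hA2 : A * A = 1) (hB2 : B * B = 1) (hAB : A * B = -(B * A)) :
    (ρ * A).trace.re ^ 2 + (ρ * B).trace.re ^ 2 ≤ 1 := by
  set x := (ρ * A).trace.re
  set y := (ρ * B).trace.re
  set r := √(x ^ 2 + y ^ 2)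
  have hr2 : r ^ 2 = x ^ 2 + y ^ 2 := Real.sq_sqrt (by positivity)
  by_cases hr0 : r = 0
  · rw [← hr2, hr0]; norm_num
  have hr : 0 < r := (Real.sqrt_nonneg _).lt_of_ne' hr0
  set C := ((x / r : ℝ) : ℂ) • A + ((y / r : ℝ) : ℂ) • B
  have hC : C.IsHermitian := by
    simp only [C, IsHermitian, conjTranspose_add, conjTranspose_smul, hA.eq, hB.eq,
      Complex.star_def, Complex.conj_ofReal]
  have hC2 : C * C = 1 := by
    rw [smul_add_smul_mul_self_of_anticomm hA2 hB2 hAB, ← Complex.ofReal_pow,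
      ← Complex.ofReal_pow, ← Complex.ofReal_add, div_pow, div_pow, ← add_div, ← hr2,
      div_self (by positivity), Complex.ofReal_one, one_smul]
  have htr : (ρ * C).trace.re = r := by
    simp only [C, mul_add, mul_smul_comm, trace_add, trace_smul, smul_eq_mul, Complex.add_re,
      Complex.re_ofReal_mul]
    field_simp
    rw [← sq, ← sq, ← hr2]
  have hr1 : r ≤ 1 := htr ▸ re_trace_mul_le_one_of_involutive hρ hρ1 hC hC2
  nlinarith

theorem abs_re_trace_mul_le_one_of_involutive {ρ C : Matrix n n ℂ} (hρ : ρ.PosSemidef)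
    (hρ1 : ρ.trace = 1) (hC : C.IsHermitian) (hC2 : C * C = 1) :
    |(ρ * C).trace.re| ≤ 1 := by
  have hneg := re_trace_mul_le_one_of_involutive hρ hρ1 hC.neg (by rwa [neg_mul_neg])
  rw [mul_neg, trace_neg, Complex.neg_re] at hneg
  exact abs_le.mpr ⟨by linarith, re_trace_mul_le_one_of_involutive hρ hρ1 hC hC2⟩

theorem exists_pm_eigvec_of_mul_self_eq_one {R : Type*} [CommRing R] {S : Matrix n n R}
    (hS : S * S = 1) {ψ : n → R} (hψ : ψ ≠ 0) :
    ∃ φ ≠ 0, (S *ᵥ φ = φ ∨ S *ᵥ φ = -φ) ∧ ∀ T : Matrix n n R, Commute T S →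
      (T *ᵥ ψ = ψ ∨ T *ᵥ ψ = -ψ) → (T *ᵥ φ = φ ∨ T *ᵥ φ = -φ) := by
  by_cases hp : ψ + S *ᵥ ψ = 0
  · refine ⟨ψ, hψ, Or.inr (eq_neg_of_add_eq_zero_right hp), fun _ _ h => h⟩
  -- `ψ + Sψ` is fixed by `S`, and any `T` commuting with `S` acts on it as on `ψ`
  refine ⟨ψ + S *ᵥ ψ, hp, Or.inl ?_, fun T hTS hT => ?_⟩
  · rw [mulVec_add, mulVec_mulVec, hS, one_mulVec, add_comm]
  have hT' : T *ᵥ (S *ᵥ ψ) = S *ᵥ (T *ᵥ ψ) := by rw [mulVec_mulVec, mulVec_mulVec, hTS.eq]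
  rcases hT with h | h
  · exact Or.inl (by rw [mulVec_add, hT', h])
  · exact Or.inr (by rw [mulVec_add, hT', h, mulVec_neg, neg_add])

theorem exists_common_pm_eigvec [Nonempty n] {R : Type*} [CommRing R] [Nontrivial R]
    {ι : Type*} [DecidableEq ι] (I : Finset ι) (S : ι → Matrix n n R)
    (hS : ∀ i ∈ I, S i * S i = 1) (hcomm : (I : Set ι).Pairwise fun i j => Commute (S i) (S j)) :
    ∃ φ ≠ 0, ∀ i ∈ I, S i *ᵥ φ = φ ∨ S i *ᵥ φ = -φ := by
  induction I using Finset.induction_on with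
  | empty => exact ⟨fun _ => 1, Function.ne_iff.mpr ⟨Classical.arbitrary n, one_ne_zero⟩, by simp⟩
  | @insert j I hj ih =>
    rw [Finset.coe_insert, Set.pairwise_insert] at hcomm
    obtain ⟨ψ, hψ, hψI⟩ := ih (fun i hi => hS i (Finset.mem_insert_of_mem hi)) hcomm.1
    obtain ⟨φ, hφ, hφj, hφI⟩ :=
      exists_pm_eigvec_of_mul_self_eq_one (hS j (Finset.mem_insert_self j I)) hψ
    refine ⟨φ, hφ, Finset.forall_mem_insert _ _ _ |>.mpr ⟨hφj, fun i hi => ?_⟩⟩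
    exact hφI _ (hcomm.2 i hi (ne_of_mem_of_not_mem hi hj).symm).2 (hψI i hi)

theorem exists_density_trace_mul_eq {φ : n → ℂ} (hφ : φ ≠ 0) :
    ∃ ρ : Matrix n n ℂ, ρ.PosSemidef ∧ ρ.trace = 1 ∧
      ∀ A, (ρ * A).trace = (star φ ⬝ᵥ (A *ᵥ φ)) / (star φ ⬝ᵥ φ) := by
  have hnorm : star φ ⬝ᵥ φ ≠ 0 := dotProduct_star_self_eq_zero.not.mpr hφ
  refine ⟨(star φ ⬝ᵥ φ)⁻¹ • vecMulVec φ (star φ),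
    (posSemidef_vecMulVec_self_star φ).smul (inv_nonneg_of_nonneg (dotProduct_star_self_nonneg φ)),
    ?_, fun A => ?_⟩
  · rw [trace_smul, trace_vecMulVec, dotProduct_comm φ, smul_eq_mul, inv_mul_cancel₀ hnorm]
  · rw [smul_mul_assoc, trace_smul, trace_mul_comm, mul_vecMulVec, trace_vecMulVec,
      dotProduct_comm (A *ᵥ φ), smul_eq_mul, inv_mul_eq_div]

end Matrix

section Independence

variable {V : Type*} [Fintype V] (G : SimpleGraph V) {w : V → ℝ}

theorem sum_le_alphaW (hw : ∀ i, 0 ≤ w i) {I : Finset V} (hI : IsIndepSet G I) :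
    ∑ i ∈ I, w i ≤ alphaW G w := by
  refine le_csSup ⟨∑ i, w i, ?_⟩ ⟨I, hI, rfl⟩
  rintro _ ⟨J, -, rfl⟩
  exact Finset.sum_le_univ_sum_of_nonneg hw

theorem alphaW_nonneg (hw : ∀ i, 0 ≤ w i) : 0 ≤ alphaW G w := by
  simpa using sum_le_alphaW G hw (I := ∅) (by simp [IsIndepSet])

theorem alphaW_le {c : ℝ} (hc : ∀ I, IsIndepSet G I → ∑ i ∈ I, w i ≤ c) : alphaW G w ≤ c :=
  csSup_le ⟨0, ∅, by simp [IsIndepSet]⟩ fun _ ⟨I, hI, hr⟩ => hr ▸ hc I hI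

theorem sum_mul_abs_pow_le_alphaW_add (hw : ∀ i, 0 ≤ w i) {x : V → ℝ} (hx : ∀ i, |x i| ≤ 1)
    (hadj : ∀ i j, G.Adj i j → x i ^ 2 + x j ^ 2 ≤ 1) (k : ℕ) :
    ∑ i, w i * |x i| ^ k ≤ alphaW G w + (∑ i, w i) * √(2⁻¹) ^ k := by
  classical
  set t := √(2⁻¹)
  have ht : t ^ 2 = 2⁻¹ := Real.sq_sqrt (by norm_num)
  set I := Finset.univ.filter fun i => t < |x i|
  have hI : IsIndepSet G I := by
    intro a ha b hb hab
    have hsq : ∀ i ∈ I, 2⁻¹ < x i ^ 2 := fun i hi => by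
      rw [← ht, ← sq_abs (x i)]
      exact pow_lt_pow_left₀ (Finset.mem_filter.mp hi).2 (Real.sqrt_nonneg _) two_ne_zero
    linarith [hsq a ha, hsq b hb, hadj a b hab]
  set J := Finset.univ.filter fun i => ¬t < |x i|
  calc ∑ i, w i * |x i| ^ k = ∑ i ∈ I, w i * |x i| ^ k + ∑ i ∈ J, w i * |x i| ^ k :=
        (Finset.sum_filter_add_sum_filter_not _ _ _).symm
    _ ≤ ∑ i ∈ I, w i + ∑ i ∈ J, w i * t ^ k := by
        gcongr with i hi i hi
        · exact mul_le_of_le_one_right (hw i) (pow_le_one₀ (abs_nonneg _) (hx i))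
        · exact hw i
        · exact not_lt.mp (Finset.mem_filter.mp hi).2
    _ ≤ alphaW G w + (∑ i, w i) * t ^ k := by
        rw [← Finset.sum_mul]
        exact add_le_add (sum_le_alphaW G hw hI)
          (mul_le_mul_of_nonneg_right (Finset.sum_le_univ_sum_of_nonneg hw) (by positivity))

end Independence

/-- The paper's `β(G, w, k)`. -/
noncomputable def densityBeta {V n : Type*} [Fintype V] [Fintype n] (S : V → Matrix n n ℂ)
    (w : V → ℝ) (k : ℕ) : ℝ :=
  sSup {r : ℝ | ∃ ρ : Matrix n n ℂ, ρ.PosSemidef ∧ ρ.trace = 1 ∧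
    r = ∑ i, w i * |((ρ * S i).trace).re| ^ k}

section Realization

variable {V : Type*} [Fintype V] {G : SimpleGraph V} {d : ℕ} {S : V → Matrix (Fin d) (Fin d) ℂ}
  {w : V → ℝ}

theorem IsRealization.sum_le_alphaW_add (hS : IsRealization G d S) (hw : ∀ i, 0 ≤ w i)
    {ρ : Matrix (Fin d) (Fin d) ℂ} (hρ : ρ.PosSemidef) (hρ1 : ρ.trace = 1) (k : ℕ) :
    ∑ i, w i * |((ρ * S i).trace).re| ^ k ≤ alphaW G w + (∑ i, w i) * √(2⁻¹) ^ k :=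
  sum_mul_abs_pow_le_alphaW_add G hw
    (fun i => abs_re_trace_mul_le_one_of_involutive hρ hρ1 (hS.1 i) (hS.2.1 i))
    (fun i j hij => sq_add_sq_re_trace_le_one_of_anticomm hρ hρ1 (hS.1 i) (hS.1 j) (hS.2.1 i)
      (hS.2.1 j) (hS.2.2.1 i j hij)) k

theorem IsRealization.densityBeta_le (hS : IsRealization G d S) (hw : ∀ i, 0 ≤ w i) (k : ℕ) :
    densityBeta S w k ≤ alphaW G w + (∑ i, w i) * √(2⁻¹) ^ k := by
  refine Real.sSup_le ?_ (add_nonneg (alphaW_nonneg G hw)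
    (mul_nonneg (Finset.sum_nonneg fun i _ => hw i) (by positivity)))
  rintro _ ⟨ρ, hρ, hρ1, rfl⟩
  exact hS.sum_le_alphaW_add hw hρ hρ1 k

theorem IsRealization.alphaW_le_densityBeta (hd : 1 ≤ d) (hS : IsRealization G d S)
    (hw : ∀ i, 0 ≤ w i) (k : ℕ) : alphaW G w ≤ densityBeta S w k := by
  classical
  refine alphaW_le G fun I hI => ?_
  have : Nonempty (Fin d) := ⟨⟨0, hd⟩⟩
  obtain ⟨φ, hφ, hφI⟩ := exists_common_pm_eigvec I S (fun i _ => hS.2.1 i)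
    fun i hi j hj hij => hS.2.2.2 i j hij (hI i hi j hj)
  obtain ⟨ρ, hρ, hρ1, hρS⟩ := exists_density_trace_mul_eq hφ
  have hnorm : star φ ⬝ᵥ φ ≠ 0 := dotProduct_star_self_eq_zero.not.mpr hφ
  have hI1 : ∀ i ∈ I, |((ρ * S i).trace).re| = 1 := fun i hi => by
    rcases hφI i hi with h | h <;> simp [hρS, h, hnorm]
  calc ∑ i ∈ I, w i = ∑ i ∈ I, w i * |((ρ * S i).trace).re| ^ k :=
        Finset.sum_congr rfl fun i hi => by rw [hI1 i hi, one_pow, mul_one]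
    _ ≤ ∑ i, w i * |((ρ * S i).trace).re| ^ k :=
        Finset.sum_le_univ_sum_of_nonneg fun i => mul_nonneg (hw i) (by positivity)
    _ ≤ densityBeta S w k :=
        le_csSup ⟨_, fun _ ⟨ρ, hρ, hρ1, hr⟩ => hr ▸ hS.sum_le_alphaW_add hw hρ hρ1 k⟩
          ⟨ρ, hρ, hρ1, rfl⟩

end Realization

/-- The generalized beta numbers β(G,w,k), defined as suprema over density matrices of the
weighted sums of k-th powers of absolute expectations, converge to the weighted independence
number α(G,w) as k → ∞. -/
theorem stmt_13 {V : Type*} [Fintype V] (G : SimpleGraph V) (d : ℕ) (hd : 1 ≤ d)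
    (S : V → Matrix (Fin d) (Fin d) ℂ) (hS : IsRealization G d S)
    (w : V → ℝ) (hw : ∀ i, 0 ≤ w i) :
    Filter.Tendsto (fun k : ℕ => sSup {r : ℝ | ∃ ρ : Matrix (Fin d) (Fin d) ℂ,
        ρ.PosSemidef ∧ ρ.trace = 1 ∧ r = ∑ i, w i * |((ρ * S i).trace).re| ^ k})
      Filter.atTop (nhds (alphaW G w)) := by
  change Filter.Tendsto (densityBeta S w) _ _
  have hgeom : Filter.Tendsto (fun k : ℕ => alphaW G w + (∑ i, w i) * √(2⁻¹) ^ k)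
      Filter.atTop (nhds (alphaW G w)) := by
    have ht : √(2⁻¹) < 1 := (Real.sqrt_lt' one_pos).mpr (by norm_num)
    simpa using ((tendsto_pow_atTop_nhds_zero_of_lt_one (Real.sqrt_nonneg _) ht).const_mul
      (∑ i, w i)).const_add (alphaW G w)
  exact tendsto_of_tendsto_of_tendsto_of_le_of_le tendsto_const_nhds hgeom
    (hS.alphaW_le_densityBeta hd hw) (hS.densityBeta_le hw)
end

section
/- Let d ≥ 1 and let S₁, …, S_m be Hermitian complex d×d matrices with S_i * S_i = 1 for all i and S_i * S_j = -(S_j * S_i) for all i ≠ j (a pairwise anticommuting family of Hermitian involutions, i.e., a realization of the complete graph K_m). Then for every unit vector ψ ∈ ℂ^d, ∑_{i=1}^m (ψᴴ S_i ψ)² ≤ 1. -/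
open Matrix

/-! For real coefficients `c`, the matrix `M = ∑ cᵢ Sᵢ` is Hermitian and, by anticommutation,
`M² = (∑ cᵢ²) • 1`. Taking `cᵢ = ⟨ψ, Sᵢ ψ⟩` gives `⟨ψ, M ψ⟩ = ∑ cᵢ² =: s`, while Cauchy–Schwarz gives
`⟨ψ, M ψ⟩² ≤ ‖M ψ‖² = ⟨ψ, M² ψ⟩ = s`. Hence `s² ≤ s`, i.e. `s ≤ 1`. -/

theorem sum_smul_mul_self_of_anticommute {ι R A : Type*} [CommSemiring R] [Ring A] [Algebra R A]
    (s : Finset ι) (a : ι → A) (c : ι → R) (hsq : ∀ i ∈ s, a i * a i = 1)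
    (hanti : ∀ i ∈ s, ∀ j ∈ s, i ≠ j → a i * a j = -(a j * a i)) :
    (∑ i ∈ s, c i • a i) * (∑ i ∈ s, c i • a i) = (∑ i ∈ s, c i ^ 2) • 1 := by
  classical
  induction s using Finset.induction_on with
  | empty => simp
  | insert k s hk ih =>
    set x := ∑ i ∈ s, c i • a i
    have hcross : a k * x + x * a k = 0 := by
      rw [Finset.mul_sum, Finset.sum_mul, ← Finset.sum_add_distrib]
      refine Finset.sum_eq_zero fun i hi => ?_
      have hki : k ≠ i := fun h => hk (h ▸ hi)
      rw [mul_smul_comm, smul_mul_assoc, ← smul_add,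
        hanti k (s.mem_insert_self k) i (s.mem_insert_of_mem hi) hki, neg_add_cancel, smul_zero]
    have hx : x * x = (∑ i ∈ s, c i ^ 2) • 1 :=
      ih (fun i hi => hsq i (s.mem_insert_of_mem hi))
        (fun i hi j hj => hanti i (s.mem_insert_of_mem hi) j (s.mem_insert_of_mem hj))
    rw [Finset.sum_insert hk, Finset.sum_insert hk, add_smul]
    calc (c k • a k + x) * (c k • a k + x)
        = (c k ^ 2) • (a k * a k) + c k • (a k * x + x * a k) + x * x := by
          simp only [add_mul, mul_add, smul_mul_assoc, mul_smul_comm, smul_smul, smul_add, sq]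
          abel
      _ = _ := by rw [hsq k (s.mem_insert_self k), hcross, smul_zero, add_zero, hx]

theorem norm_dotProduct_mulVec_sq_le {𝕜 n : Type*} [RCLike 𝕜] [Fintype n] (M : Matrix n n 𝕜)
    (ψ : n → 𝕜) :
    ‖star ψ ⬝ᵥ M *ᵥ ψ‖ ^ 2 ≤ RCLike.re (star ψ ⬝ᵥ ψ) * RCLike.re (star ψ ⬝ᵥ (Mᴴ * M) *ᵥ ψ) := by
  have hcs := inner_mul_inner_self_le (𝕜 := 𝕜) (WithLp.toLp 2 ψ) (WithLp.toLp 2 (M *ᵥ ψ))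
  rw [← mulVec_mulVec, dotProduct_mulVec (star ψ) Mᴴ, ← star_mulVec]
  simp only [EuclideanSpace.inner_toLp_toLp] at hcs
  rw [dotProduct_comm (M *ᵥ ψ) (star ψ), dotProduct_comm ψ (star (M *ᵥ ψ)),
    dotProduct_comm ψ (star ψ), dotProduct_comm (M *ᵥ ψ) (star (M *ᵥ ψ)),
    star_dotProduct (M *ᵥ ψ) ψ, norm_star] at hcs
  rwa [sq]

theorem stmt_14_general (d m : ℕ) (S : Fin m → Matrix (Fin d) (Fin d) ℂ)
    (hherm : ∀ i, (S i).IsHermitian) (hsq : ∀ i, S i * S i = 1)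
    (hanti : ∀ i j, i ≠ j → S i * S j = -(S j * S i)) :
    ∀ ψ : Fin d → ℂ, star ψ ⬝ᵥ ψ = 1 →
      ∑ i, ((star ψ ⬝ᵥ ((S i) *ᵥ ψ)).re) ^ 2 ≤ 1 := by
  intro ψ hψ
  set c : Fin m → ℝ := fun i => (star ψ ⬝ᵥ (S i *ᵥ ψ)).re
  set M := ∑ i, c i • S i
  have hM_herm : Mᴴ = M := by
    simp only [M, conjTranspose_sum, conjTranspose_smul, star_trivial, (hherm _).eq]
  set s := ∑ i, c i ^ 2
  have hM_sq : M * M = s • 1 :=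
    sum_smul_mul_self_of_anticommute _ S c (fun i _ => hsq i) (fun i _ j _ => hanti i j)
  have hM_exp : (star ψ ⬝ᵥ M *ᵥ ψ).re = s := by
    simp only [M, s, sum_mulVec, dotProduct_sum, Complex.re_sum, smul_mulVec, dotProduct_smul,
      Complex.smul_re, smul_eq_mul, sq]
    rfl
  have hs_nonneg : 0 ≤ s := Finset.sum_nonneg fun i _ => sq_nonneg (c i)
  have hs_sq : s ^ 2 ≤ s := by
    have hcs := norm_dotProduct_mulVec_sq_le M ψ
    rw [hM_herm, hM_sq, smul_mulVec, one_mulVec, dotProduct_smul, hψ] at hcs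
    calc s ^ 2 = (star ψ ⬝ᵥ M *ᵥ ψ).re ^ 2 := by rw [hM_exp]
      _ ≤ ‖star ψ ⬝ᵥ M *ᵥ ψ‖ ^ 2 :=
          pow_le_pow_left₀ (hM_exp.symm ▸ hs_nonneg) (Complex.re_le_norm _) 2
      _ ≤ s := by
          simpa only [RCLike.re_to_complex, Complex.one_re, one_mul, Complex.real_smul, mul_one,
            Complex.ofReal_re] using hcs
  nlinarith

/-- For a pairwise anticommuting family of Hermitian involutions (a realization of the complete
graph), the sum of squared expectations at any unit vector is at most 1. -/
theorem stmt_14 (d m : ℕ) (hd : 1 ≤ d) (S : Fin m → Matrix (Fin d) (Fin d) ℂ)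
    (hherm : ∀ i, (S i).IsHermitian) (hsq : ∀ i, S i * S i = 1)
    (hanti : ∀ i j, i ≠ j → S i * S j = -(S j * S i)) :
    ∀ ψ : Fin d → ℂ, star ψ ⬝ᵥ ψ = 1 →
      ∑ i, ((star ψ ⬝ᵥ ((S i) *ᵥ ψ)).re) ^ 2 ≤ 1 :=
  stmt_14_general d m S hherm hsq hanti
end

section
/- Let G be a finite simple graph on a vertex type V, let d₁, d₂ ≥ 1, let S be a realization of G in dimension d₁ and S' a realization of the same graph G in dimension d₂, let w : V → ℝ be nonnegative weights, and let ρ be a separable state on ℂ^{d₁} ⊗ ℂ^{d₂}. Then ∑_i w i * |tr(ρ * (S i ⊗ S' i))| ≤ max(β_S(w), β_{S'}(w)), where S i ⊗ S' i denotes the Kronecker product. -/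
open Matrix
open scoped ComplexOrder

/-! For a product state `ρ₁ ⊗ ρ₂` the correlation factorises,
`tr((ρ₁ ⊗ ρ₂)(S i ⊗ S' i)) = tr(ρ₁ S i) tr(ρ₂ S' i)`, and `|a b| ≤ (a² + b²) / 2` bounds the
weighted sum by the mean of `∑ i, w i tr(ρ₁ S i)²` and `∑ i, w i tr(ρ₂ S' i)²`. Each of these is
at most the beta value: writing `ρ = ∑ λ_k u_k u_kᴴ` in an eigenbasis,
`tr(ρ S i) = ∑ λ_k ⟨S i⟩_{u_k}`, and convexity of the square gives
`∑ i, w i tr(ρ S i)² ≤ ∑ λ_k ∑ i, w i ⟨S i⟩²_{u_k} ≤ β_S(w)`. A separable state is a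
convex combination of product states, and the left-hand side is convex in the state. -/

section

variable {n : Type*} [Fintype n]

lemma EuclideanSpace.norm_toLp_eq_one {ψ : n → ℂ} (hψ : star ψ ⬝ᵥ ψ = 1) :
    ‖WithLp.toLp 2 ψ‖ = 1 := by
  rw [norm_eq_sqrt_re_inner (𝕜 := ℂ), EuclideanSpace.inner_toLp_toLp, dotProduct_comm, hψ]
  simp

lemma OrthonormalBasis.star_dotProduct_self_eq_one
    (b : OrthonormalBasis n ℂ (EuclideanSpace ℂ n)) (k : n) :
    star ⇑(b k) ⬝ᵥ ⇑(b k) = 1 := by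
  rw [dotProduct_comm, ← EuclideanSpace.inner_eq_star_dotProduct]
  exact inner_self_eq_one_of_norm_eq_one (b.orthonormal.1 k)

namespace Matrix

lemma trace_eq_sum_star_dotProduct_mulVec [DecidableEq n] (M : Matrix n n ℂ)
    (b : OrthonormalBasis n ℂ (EuclideanSpace ℂ n)) :
    M.trace = ∑ k, star ⇑(b k) ⬝ᵥ (M *ᵥ ⇑(b k)) := by
  rw [← trace_toLin_eq M (PiLp.basisFun 2 ℂ n), ← toLpLin_eq_toLin,
    LinearMap.trace_eq_sum_inner _ b]
  simp [EuclideanSpace.inner_eq_star_dotProduct, dotProduct_comm]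

lemma IsHermitian.trace_mul_eq_sum_eigenvalues [DecidableEq n] {ρ : Matrix n n ℂ}
    (hρ : ρ.IsHermitian) (B : Matrix n n ℂ) :
    (ρ * B).trace = ∑ k, (hρ.eigenvalues k : ℂ) *
      (star ⇑(hρ.eigenvectorBasis k) ⬝ᵥ (B *ᵥ ⇑(hρ.eigenvectorBasis k))) := by
  rw [trace_mul_comm, trace_eq_sum_star_dotProduct_mulVec _ hρ.eigenvectorBasis]
  refine Finset.sum_congr rfl fun k _ => ?_
  rw [← mulVec_mulVec, hρ.mulVec_eigenvectorBasis, mulVec_smul, dotProduct_smul,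
    Complex.real_smul]

lemma IsHermitian.ofReal_re_trace_mul {ρ A : Matrix n n ℂ} (hρ : ρ.IsHermitian)
    (hA : A.IsHermitian) : ((ρ * A).trace.re : ℂ) = (ρ * A).trace := by
  refine Complex.conj_eq_iff_re.mp ?_
  rw [← Complex.star_def, ← trace_conjTranspose, conjTranspose_mul, hA.eq, hρ.eq,
    trace_mul_comm]

lemma IsHermitian.mem_unitaryGroup_of_mul_self_eq_one [DecidableEq n] {A : Matrix n n ℂ}
    (hA : A.IsHermitian) (hA2 : A * A = 1) : A ∈ unitaryGroup n ℂ := by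
  rwa [mem_unitaryGroup_iff', star_eq_conjTranspose, hA.eq]

lemma norm_star_dotProduct_mulVec_le_one [DecidableEq n] {A : Matrix n n ℂ}
    (hA : A ∈ unitaryGroup n ℂ) {ψ : n → ℂ} (hψ : star ψ ⬝ᵥ ψ = 1) :
    ‖star ψ ⬝ᵥ (A *ᵥ ψ)‖ ≤ 1 := by
  have hAψ : star (A *ᵥ ψ) ⬝ᵥ (A *ᵥ ψ) = 1 := by
    rw [star_mulVec, dotProduct_mulVec, vecMul_vecMul, ← star_eq_conjTranspose,
      mem_unitaryGroup_iff'.mp hA, vecMul_one, hψ]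
  calc ‖star ψ ⬝ᵥ (A *ᵥ ψ)‖ = ‖inner ℂ (WithLp.toLp 2 ψ) (WithLp.toLp 2 (A *ᵥ ψ))‖ := by
        rw [EuclideanSpace.inner_toLp_toLp, dotProduct_comm]
    _ ≤ ‖WithLp.toLp 2 ψ‖ * ‖WithLp.toLp 2 (A *ᵥ ψ)‖ := norm_inner_le_norm _ _
    _ = 1 := by rw [EuclideanSpace.norm_toLp_eq_one hψ,
      EuclideanSpace.norm_toLp_eq_one hAψ, mul_one]

lemma norm_trace_sum_smul_mul_le {k : ℕ} (c : Fin k → ℝ)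
    (hc : ∀ j, 0 ≤ c j) (ρ : Fin k → Matrix n n ℂ) (X : Matrix n n ℂ) :
    ‖((∑ j, (c j : ℂ) • ρ j) * X).trace‖ ≤ ∑ j, c j * ‖(ρ j * X).trace‖ := by
  rw [Finset.sum_mul, trace_sum]
  refine (norm_sum_le _ _).trans_eq (Finset.sum_congr rfl fun j _ => ?_)
  rw [smul_mul_assoc, trace_smul, smul_eq_mul, norm_mul, Complex.norm_real,
    Real.norm_of_nonneg (hc j)]

end Matrix

end

section Realization

variable {V : Type*} [Fintype V] {d : ℕ}

lemma expectation_sq_le_one {A : Matrix (Fin d) (Fin d) ℂ} (hA : A ∈ unitaryGroup (Fin d) ℂ)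
    {ψ : Fin d → ℂ} (hψ : star ψ ⬝ᵥ ψ = 1) : expectation A ψ ^ 2 ≤ 1 :=
  sq_le_one_iff_abs_le_one _ |>.mpr <|
    (Complex.abs_re_le_norm _).trans (norm_star_dotProduct_mulVec_le_one hA hψ)

lemma sum_mul_expectation_sq_le_betaVal {S : V → Matrix (Fin d) (Fin d) ℂ}
    (hS : ∀ i, S i ∈ unitaryGroup (Fin d) ℂ) {w : V → ℝ} (hw : ∀ i, 0 ≤ w i)
    {ψ : Fin d → ℂ} (hψ : star ψ ⬝ᵥ ψ = 1) :
    ∑ i, w i * expectation (S i) ψ ^ 2 ≤ betaVal S w := by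
  refine le_csSup ⟨∑ i, w i, ?_⟩ ⟨ψ, hψ, rfl⟩
  rintro _ ⟨φ, hφ, rfl⟩
  exact Finset.sum_le_sum fun i _ =>
    mul_le_of_le_one_right (hw i) (expectation_sq_le_one (hS i) hφ)

lemma sum_mul_re_trace_mul_sq_le_betaVal {S : V → Matrix (Fin d) (Fin d) ℂ}
    (hS : ∀ i, S i ∈ unitaryGroup (Fin d) ℂ) {w : V → ℝ} (hw : ∀ i, 0 ≤ w i)
    {ρ : Matrix (Fin d) (Fin d) ℂ} (hρ : ρ.PosSemidef) (htr : ρ.trace = 1) :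
    ∑ i, w i * (ρ * S i).trace.re ^ 2 ≤ betaVal S w := by
  set p := hρ.1.eigenvalues
  set u := fun k => ⇑(hρ.1.eigenvectorBasis k)
  have hp : ∀ k, 0 ≤ p k := hρ.eigenvalues_nonneg
  have hp1 : ∑ k, p k = 1 := by
    have := hρ.1.trace_eq_sum_eigenvalues
    rw [htr] at this
    exact Complex.ofReal_injective (by push_cast; exact this.symm)
  have hre : ∀ i, (ρ * S i).trace.re = ∑ k, p k * expectation (S i) (u k) := fun i => by
    simp [hρ.1.trace_mul_eq_sum_eigenvalues, Complex.re_sum, expectation, p, u]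
  calc ∑ i, w i * (ρ * S i).trace.re ^ 2
      ≤ ∑ i, w i * ∑ k, p k * expectation (S i) (u k) ^ 2 := by
        refine Finset.sum_le_sum fun i _ => mul_le_mul_of_nonneg_left ?_ (hw i)
        rw [hre]
        simpa using (even_two.convexOn_pow (𝕜 := ℝ)).map_sum_le (fun k _ => hp k) hp1
          (p := fun k => expectation (S i) (u k)) fun _ _ => Set.mem_univ _
    _ = ∑ k, p k * ∑ i, w i * expectation (S i) (u k) ^ 2 := by
        simp only [Finset.mul_sum, mul_left_comm]
        exact Finset.sum_comm
    _ ≤ ∑ k, p k * betaVal S w := by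
        gcongr with k
        · exact hp k
        · exact sum_mul_expectation_sq_le_betaVal hS hw
            (OrthonormalBasis.star_dotProduct_self_eq_one _ k)
    _ = betaVal S w := by rw [← Finset.sum_mul, hp1, one_mul]

end Realization

open Kronecker in
lemma sum_mul_norm_trace_kronecker_le_max {V : Type*} [Fintype V] {d₁ d₂ : ℕ}
    {S : V → Matrix (Fin d₁) (Fin d₁) ℂ} {S' : V → Matrix (Fin d₂) (Fin d₂) ℂ}
    (hS : ∀ i, (S i).IsHermitian) (hS2 : ∀ i, S i * S i = 1)
    (hS' : ∀ i, (S' i).IsHermitian) (hS'2 : ∀ i, S' i * S' i = 1)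
    {w : V → ℝ} (hw : ∀ i, 0 ≤ w i)
    {ρ₁ : Matrix (Fin d₁) (Fin d₁) ℂ} (hρ₁ : ρ₁.PosSemidef) (htr₁ : ρ₁.trace = 1)
    {ρ₂ : Matrix (Fin d₂) (Fin d₂) ℂ} (hρ₂ : ρ₂.PosSemidef) (htr₂ : ρ₂.trace = 1) :
    ∑ i, w i * ‖((ρ₁ ⊗ₖ ρ₂) * (S i ⊗ₖ S' i)).trace‖ ≤ max (betaVal S w) (betaVal S' w) := by
  set a := fun i => (ρ₁ * S i).trace.re
  set b := fun i => (ρ₂ * S' i).trace.re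
  have hab : ∀ i, ‖((ρ₁ ⊗ₖ ρ₂) * (S i ⊗ₖ S' i)).trace‖ ≤ (a i ^ 2 + b i ^ 2) / 2 := fun i => by
    rw [← mul_kronecker_mul, trace_kronecker, ← hρ₁.1.ofReal_re_trace_mul (hS i),
      ← hρ₂.1.ofReal_re_trace_mul (hS' i), ← Complex.ofReal_mul, Complex.norm_real,
      Real.norm_eq_abs, abs_mul]
    nlinarith [two_mul_le_add_sq |a i| |b i|, sq_abs (a i), sq_abs (b i)]
  have hβ := sum_mul_re_trace_mul_sq_le_betaVal
    (fun i => (hS i).mem_unitaryGroup_of_mul_self_eq_one (hS2 i)) hw hρ₁ htr₁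
  have hβ' := sum_mul_re_trace_mul_sq_le_betaVal
    (fun i => (hS' i).mem_unitaryGroup_of_mul_self_eq_one (hS'2 i)) hw hρ₂ htr₂
  calc ∑ i, w i * ‖((ρ₁ ⊗ₖ ρ₂) * (S i ⊗ₖ S' i)).trace‖
      ≤ ∑ i, w i * ((a i ^ 2 + b i ^ 2) / 2) := by gcongr with i; exacts [hw i, hab i]
    _ = (∑ i, w i * a i ^ 2 + ∑ i, w i * b i ^ 2) / 2 := by
        rw [← Finset.sum_add_distrib, Finset.sum_div]
        exact Finset.sum_congr rfl fun _ _ => by ring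
    _ ≤ max (betaVal S w) (betaVal S' w) := by
        linarith [le_max_left (betaVal S w) (betaVal S' w),
          le_max_right (betaVal S w) (betaVal S' w)]

open Kronecker in
theorem stmt_15_general {V : Type*} [Fintype V] (G : SimpleGraph V) (d₁ d₂ : ℕ)
    (S : V → Matrix (Fin d₁) (Fin d₁) ℂ) (hS : IsRealization G d₁ S)
    (S' : V → Matrix (Fin d₂) (Fin d₂) ℂ) (hS' : IsRealization G d₂ S')
    (w : V → ℝ) (hw : ∀ i, 0 ≤ w i)
    (ρ : Matrix (Fin d₁ × Fin d₂) (Fin d₁ × Fin d₂) ℂ)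
    (hsep : ∃ (k : ℕ) (c : Fin k → ℝ) (ρ₁ : Fin k → Matrix (Fin d₁) (Fin d₁) ℂ)
        (ρ₂ : Fin k → Matrix (Fin d₂) (Fin d₂) ℂ),
        (∀ j, 0 ≤ c j) ∧ (∑ j, c j) = 1 ∧
        (∀ j, (ρ₁ j).PosSemidef ∧ (ρ₁ j).trace = 1) ∧
        (∀ j, (ρ₂ j).PosSemidef ∧ (ρ₂ j).trace = 1) ∧
        ρ = ∑ j, (c j : ℂ) • (ρ₁ j ⊗ₖ ρ₂ j)) :
    ∑ i, w i * ‖(ρ * (S i ⊗ₖ S' i)).trace‖ ≤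
      max (betaVal S w) (betaVal S' w) := by
  obtain ⟨k, c, ρ₁, ρ₂, hc, hc1, hρ₁, hρ₂, rfl⟩ := hsep
  calc ∑ i, w i * ‖((∑ j, (c j : ℂ) • (ρ₁ j ⊗ₖ ρ₂ j)) * (S i ⊗ₖ S' i)).trace‖
      ≤ ∑ i, w i * ∑ j, c j * ‖((ρ₁ j ⊗ₖ ρ₂ j) * (S i ⊗ₖ S' i)).trace‖ := by
        gcongr with i
        · exact hw i
        · exact norm_trace_sum_smul_mul_le c hc _ _
    _ = ∑ j, c j * ∑ i, w i * ‖((ρ₁ j ⊗ₖ ρ₂ j) * (S i ⊗ₖ S' i)).trace‖ := by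
        simp only [Finset.mul_sum, mul_left_comm]
        exact Finset.sum_comm
    _ ≤ ∑ j, c j * max (betaVal S w) (betaVal S' w) := by
        gcongr with j
        · exact hc j
        · exact sum_mul_norm_trace_kronecker_le_max hS.1 hS.2.1 hS'.1 hS'.2.1 hw
            (hρ₁ j).1 (hρ₁ j).2 (hρ₂ j).1 (hρ₂ j).2
    _ = max (betaVal S w) (betaVal S' w) := by rw [← Finset.sum_mul, hc1, one_mul]

open Kronecker in
/-- For two realizations S, S' of the same graph and any separable bipartite state ρ, the
weighted sum of absolute correlations is bounded by the larger of the two beta values. -/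
theorem stmt_15 {V : Type*} [Fintype V] (G : SimpleGraph V) (d₁ d₂ : ℕ)
    (h₁ : 1 ≤ d₁) (h₂ : 1 ≤ d₂)
    (S : V → Matrix (Fin d₁) (Fin d₁) ℂ) (hS : IsRealization G d₁ S)
    (S' : V → Matrix (Fin d₂) (Fin d₂) ℂ) (hS' : IsRealization G d₂ S')
    (w : V → ℝ) (hw : ∀ i, 0 ≤ w i)
    (ρ : Matrix (Fin d₁ × Fin d₂) (Fin d₁ × Fin d₂) ℂ)
    (hsep : ∃ (k : ℕ) (c : Fin k → ℝ) (ρ₁ : Fin k → Matrix (Fin d₁) (Fin d₁) ℂ)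
        (ρ₂ : Fin k → Matrix (Fin d₂) (Fin d₂) ℂ),
        (∀ j, 0 ≤ c j) ∧ (∑ j, c j) = 1 ∧
        (∀ j, (ρ₁ j).PosSemidef ∧ (ρ₁ j).trace = 1) ∧
        (∀ j, (ρ₂ j).PosSemidef ∧ (ρ₂ j).trace = 1) ∧
        ρ = ∑ j, (c j : ℂ) • (ρ₁ j ⊗ₖ ρ₂ j)) :
    ∑ i, w i * ‖(ρ * (S i ⊗ₖ S' i)).trace‖ ≤
      max (betaVal S w) (betaVal S' w) :=
  stmt_15_general G d₁ d₂ S hS S' hS' w hw ρ hsep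
end

section
/- Let p₁, p₂, p₃, p₄ be nonnegative reals with p₁ + p₂ + p₃ + p₄ = 1, let |Ψ₁⟩ = (e₀₀ + e₁₁)/√2, |Ψ₂⟩ = (e₀₀ − e₁₁)/√2, |Ψ₃⟩ = (e₀₁ + e₁₀)/√2, |Ψ₄⟩ = (e₀₁ − e₁₀)/√2 be the four Bell vectors in ℂ² ⊗ ℂ² (e_{ab} the standard basis), and let ρ = ∑_{i=1}^4 p_i |Ψ_i⟩⟨Ψ_i| be the corresponding Bell diagonal state. Then max_i p_i > 1/2 if and only if |tr(ρ (X⊗X))| + |tr(ρ (Y⊗Y))| + |tr(ρ (Z⊗Z))| > 1. -/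
/-! The Bell vectors are unit common eigenvectors of `X ⊗ X`, `Y ⊗ Y` and `Z ⊗ Z`, with
eigenvalues `±1`, so the three correlations of `ρ` are the signed sums `a = p₁ - p₂ + p₃ - p₄`,
`b = -p₁ + p₂ + p₃ - p₄`, `c = p₁ + p₂ - p₃ - p₄`. The eight sign combinations `±a ± b ± c` are
exactly the numbers `±(4 pᵢ - 1)`, and `|a| + |b| + |c|` is the largest of them; it exceeds `1`
iff some `4 pᵢ - 1` does, since `1 - 4 pᵢ ≤ 1`. -/

open Matrix Kronecker

noncomputable section

/-- The Pauli matrix X. -/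
def PauliX : Matrix (Fin 2) (Fin 2) ℂ := !![0, 1; 1, 0]

/-- The Pauli matrix Y. -/
def PauliY : Matrix (Fin 2) (Fin 2) ℂ := !![0, -Complex.I; Complex.I, 0]

/-- The Pauli matrix Z. -/
def PauliZ : Matrix (Fin 2) (Fin 2) ℂ := !![1, 0; 0, -1]

/-- The four Bell vectors in ℂ² ⊗ ℂ². -/
def bellVec : Fin 4 → (Fin 2 × Fin 2 → ℂ) :=
  ![fun p => ((if p = (0, 0) then 1 else 0) + (if p = (1, 1) then 1 else 0)) / (Real.sqrt 2 : ℂ),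
    fun p => ((if p = (0, 0) then 1 else 0) - (if p = (1, 1) then 1 else 0)) / (Real.sqrt 2 : ℂ),
    fun p => ((if p = (0, 1) then 1 else 0) + (if p = (1, 0) then 1 else 0)) / (Real.sqrt 2 : ℂ),
    fun p => ((if p = (0, 1) then 1 else 0) - (if p = (1, 0) then 1 else 0)) / (Real.sqrt 2 : ℂ)]

/-- The Bell diagonal state with mixing weights `p`. -/
def bellDiagState (p : Fin 4 → ℝ) : Matrix (Fin 2 × Fin 2) (Fin 2 × Fin 2) ℂ :=
  ∑ i, (p i : ℂ) • Matrix.vecMulVec (bellVec i) (star (bellVec i))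

theorem Matrix.trace_vecMulVec_mul_of_mulVec_eq_smul {n R : Type*} [Fintype n] [CommSemiring R]
    {u v : n → R} {M : Matrix n n R} {s : R} (h : M *ᵥ u = s • u) :
    (vecMulVec u v * M).trace = s * (u ⬝ᵥ v) := by
  rw [trace_mul_comm, mul_vecMulVec, h, trace_vecMulVec, smul_dotProduct, smul_eq_mul]

theorem bellVec_dotProduct_star_self (i : Fin 4) : bellVec i ⬝ᵥ star (bellVec i) = 1 := by
  have half : (Real.sqrt 2 : ℂ)⁻¹ * (Real.sqrt 2 : ℂ)⁻¹ = 2⁻¹ := by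
    rw [← mul_inv, ← Complex.ofReal_mul, Real.mul_self_sqrt zero_le_two, Complex.ofReal_ofNat]
  fin_cases i <;> norm_num [dotProduct, Fintype.sum_prod_type, bellVec, neg_div, half]

theorem trace_bellDiagState_mul_of_mulVec_bellVec (p : Fin 4 → ℝ)
    {M : Matrix (Fin 2 × Fin 2) (Fin 2 × Fin 2) ℂ} {s : Fin 4 → ℝ}
    (h : ∀ i, M *ᵥ bellVec i = (s i : ℂ) • bellVec i) :
    (bellDiagState p * M).trace = ((∑ i, p i * s i : ℝ) : ℂ) := by
  simp only [bellDiagState, Finset.sum_mul, trace_sum, smul_mul, trace_smul,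
    trace_vecMulVec_mul_of_mulVec_eq_smul (h _), bellVec_dotProduct_star_self, smul_eq_mul,
    mul_one]
  push_cast
  rfl

theorem pauliX_kronecker_pauliX_mulVec_bellVec (i : Fin 4) :
    (PauliX ⊗ₖ PauliX) *ᵥ bellVec i = ((![1, -1, 1, -1] i : ℝ) : ℂ) • bellVec i := by
  fin_cases i <;> ext ⟨a, b⟩ <;> fin_cases a <;> fin_cases b <;>
    simp [mulVec, dotProduct, Fintype.sum_prod_type, bellVec, PauliX, neg_div]

theorem pauliY_kronecker_pauliY_mulVec_bellVec (i : Fin 4) :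
    (PauliY ⊗ₖ PauliY) *ᵥ bellVec i = ((![-1, 1, 1, -1] i : ℝ) : ℂ) • bellVec i := by
  fin_cases i <;> ext ⟨a, b⟩ <;> fin_cases a <;> fin_cases b <;>
    simp [mulVec, dotProduct, Fintype.sum_prod_type, bellVec, PauliY, neg_div]

theorem pauliZ_kronecker_pauliZ_mulVec_bellVec (i : Fin 4) :
    (PauliZ ⊗ₖ PauliZ) *ᵥ bellVec i = ((![1, 1, -1, -1] i : ℝ) : ℂ) • bellVec i := by
  fin_cases i <;> ext ⟨a, b⟩ <;> fin_cases a <;> fin_cases b <;>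
    simp [mulVec, dotProduct, Fintype.sum_prod_type, bellVec, PauliZ, neg_div]

theorem exists_half_lt_iff_one_lt_abs_correlations (p : Fin 4 → ℝ) (hp : ∀ i, 0 ≤ p i)
    (hsum : ∑ i, p i = 1) :
    (∃ i, 1 / 2 < p i) ↔
      1 < |∑ i, p i * ![1, -1, 1, -1] i| + |∑ i, p i * ![-1, 1, 1, -1] i| +
        |∑ i, p i * ![1, 1, -1, -1] i| := by
  simp only [Fin.sum_univ_four] at hsum
  simp only [Fin.sum_univ_four, cons_val_zero, cons_val_one, cons_val, mul_one, mul_neg,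
    ← sub_eq_add_neg]
  set a := p 0 - p 1 + p 2 - p 3 with ha
  set b := -p 0 + p 1 + p 2 - p 3 with hb
  set c := p 0 + p 1 - p 2 - p 3 with hc
  constructor
  · rintro ⟨i, hi⟩
    have := le_abs_self a; have := neg_abs_le a
    have := le_abs_self b; have := neg_abs_le b
    have := le_abs_self c; have := neg_abs_le c
    fin_cases i <;> simp only [Fin.zero_eta, Fin.mk_one, Fin.reduceFinMk] at hi <;> linarith
  · contrapose!
    intro hle
    rcases abs_cases a with ⟨hA, -⟩ | ⟨hA, -⟩ <;>
    rcases abs_cases b with ⟨hB, -⟩ | ⟨hB, -⟩ <;>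
    rcases abs_cases c with ⟨hC, -⟩ | ⟨hC, -⟩ <;>
    linarith [hp 0, hp 1, hp 2, hp 3, hle 0, hle 1, hle 2, hle 3]

/-- A Bell diagonal state has some weight exceeding 1/2 (i.e. is entangled) iff the sum of the
absolute XX, YY, ZZ correlations exceeds 1. -/
theorem stmt_16 (p : Fin 4 → ℝ) (hp : ∀ i, 0 ≤ p i) (hsum : ∑ i, p i = 1) :
    (∃ i, 1 / 2 < p i) ↔
      1 < ‖(bellDiagState p * (PauliX ⊗ₖ PauliX)).trace‖ +
          ‖(bellDiagState p * (PauliY ⊗ₖ PauliY)).trace‖ +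
          ‖(bellDiagState p * (PauliZ ⊗ₖ PauliZ)).trace‖ := by
  simp only [trace_bellDiagState_mul_of_mulVec_bellVec p pauliX_kronecker_pauliX_mulVec_bellVec,
    trace_bellDiagState_mul_of_mulVec_bellVec p pauliY_kronecker_pauliY_mulVec_bellVec,
    trace_bellDiagState_mul_of_mulVec_bellVec p pauliZ_kronecker_pauliZ_mulVec_bellVec,
    Complex.norm_real, Real.norm_eq_abs]
  exact exists_half_lt_iff_one_lt_abs_correlations p hp hsum

end
end

section
/- For k ∈ {1,2,3}, let {a,b} = {1,2,3} \ {k} with a < b, and define the 3×3 complex matrices X⁽ᵏ⁾ = E_{ab} + E_{ba}, Y⁽ᵏ⁾ = −i·E_{ab} + i·E_{ba}, and Z⁽ᵏ⁾ = E_{aa} − E_{bb}, where E_{pq} is the matrix unit with 1 in entry (p,q). Then for every separable state ρ on ℂ³ ⊗ ℂ³, ∑_{i=1}^3 ∑_{j=1}^3 ( |tr(ρ (X⁽ⁱ⁾⊗X⁽ʲ⁾))| + |tr(ρ (Y⁽ⁱ⁾⊗Y⁽ʲ⁾))| + |tr(ρ (Z⁽ⁱ⁾⊗Z⁽ʲ⁾))|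 ) ≤ 4. -/
open Matrix Kronecker
open scoped ComplexOrder

noncomputable section

/-- The matrix unit `E_{pq}` in 3×3 complex matrices. -/
def E3 (p q : Fin 3) : Matrix (Fin 3) (Fin 3) ℂ := Matrix.single p q 1

/-- `X⁽ᵏ⁾` : Pauli X on the 2-dimensional subspace of ℂ³ omitting direction `k`
(0-indexed: `subX 0 = X⁽¹⁾`, etc.). -/
def subX : Fin 3 → Matrix (Fin 3) (Fin 3) ℂ :=
  ![E3 1 2 + E3 2 1, E3 0 2 + E3 2 0, E3 0 1 + E3 1 0]

/-- `Y⁽ᵏ⁾` : Pauli Y on the 2-dimensional subspace of ℂ³ omitting direction `k`. -/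
def subY : Fin 3 → Matrix (Fin 3) (Fin 3) ℂ :=
  ![Matrix.single 1 2 (-Complex.I) + Matrix.single 2 1 Complex.I,
    Matrix.single 0 2 (-Complex.I) + Matrix.single 2 0 Complex.I,
    Matrix.single 0 1 (-Complex.I) + Matrix.single 1 0 Complex.I]

/-- `Z⁽ᵏ⁾` : Pauli Z on the 2-dimensional subspace of ℂ³ omitting direction `k`. -/
def subZ : Fin 3 → Matrix (Fin 3) (Fin 3) ℂ :=
  ![E3 1 1 - E3 2 2, E3 0 0 - E3 2 2, E3 0 0 - E3 1 1]

/-!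
Expectation values are bilinear, so for `ρ = ∑ₖ cₖ ρ₁ₖ ⊗ ρ₂ₖ` the left-hand side is at most
`∑ₖ cₖ (u(ρ₁ₖ) · u(ρ₂ₖ))`, where `u(σ) ∈ ℝ³` collects the sums of `|tr(σX⁽ⁱ⁾)|`, `|tr(σY⁽ⁱ⁾)|`,
`|tr(σZ⁽ⁱ⁾)|`. It therefore suffices that `‖u(σ)‖² ≤ 4` for every qutrit state `σ`.

Write `σ_aa = q_a²`. Then `tr(σX⁽ᵏ⁾) = 2 Re σ_ab`, `tr(σY⁽ᵏ⁾) = -2 Im σ_ab`, and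
`tr(σZ⁽ᵏ⁾) = q_a² - q_b²`. Positivity gives `|σ_ab| ≤ q_a q_b`, so by the triangle inequality
in `ℂ` the `X` and `Y` sums contribute at most `4 (q₀q₁ + q₀q₂ + q₁q₂)²`. The `Z` sum is twice the
largest `|q_a² - q_c²|`, and `(q₀q₁ + q₀q₂ + q₁q₂)² + (q_a² - q_c²)² ≤ (q₀² + q₁² + q₂²)² = 1`
is Cauchy–Schwarz for `(q_a, q_a, q_b)` and `(q_b, q_c, q_c)`.
-/

theorem Matrix.PosSemidef.norm_apply_le_sqrt_mul_sqrt {𝕜 n : Type*} [RCLike 𝕜] [Fintype n]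
    {M : Matrix n n 𝕜} (hM : M.PosSemidef) (a b : n) :
    ‖M a b‖ ≤ √(RCLike.re (M a a)) * √(RCLike.re (M b b)) := by
  have hdet := (hM.submatrix ![a, b]).det_nonneg
  rw [det_fin_two] at hdet
  simp only [submatrix_apply, Matrix.cons_val_zero, Matrix.cons_val_one] at hdet
  rw [← hM.1.apply b a, ← hM.1.coe_re_apply_self a, ← hM.1.coe_re_apply_self b, RCLike.star_def,
    RCLike.mul_conj, ← RCLike.ofReal_mul, ← RCLike.ofReal_pow, ← RCLike.ofReal_sub,
    RCLike.ofReal_nonneg, sub_nonneg] at hdet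
  have hb : 0 ≤ RCLike.re (M b b) := RCLike.nonneg_iff.1 hM.diag_nonneg |>.1
  rw [← Real.sqrt_mul' _ hb]
  exact Real.le_sqrt_of_sq_le hdet

theorem sq_sum_abs_re_add_sq_sum_abs_im_le {ι : Type*} (s : Finset ι) (z : ι → ℂ) :
    (∑ i ∈ s, |(z i).re|) ^ 2 + (∑ i ∈ s, |(z i).im|) ^ 2 ≤ (∑ i ∈ s, ‖z i‖) ^ 2 := by
  set w : ι → ℂ := fun i ↦ ⟨|(z i).re|, |(z i).im|⟩
  have hw : ∀ i, ‖w i‖ = ‖z i‖ := fun i ↦ by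
    simp [w, Complex.norm_def, Complex.normSq_apply]
  have hsum : (∑ i ∈ s, |(z i).re|) ^ 2 + (∑ i ∈ s, |(z i).im|) ^ 2 = ‖∑ i ∈ s, w i‖ ^ 2 := by
    rw [Complex.sq_norm, Complex.normSq_apply, Complex.re_sum, Complex.im_sum]; ring
  rw [hsum, ← Finset.sum_congr rfl fun i _ ↦ hw i]
  exact pow_le_pow_left₀ (norm_nonneg _) (norm_sum_le _ _) 2

-- The hints are the terms of Lagrange's identity for `(a, a, b)` and `(b, c, c)`.
theorem sq_add_sq_sub_sq_le_sq_sum_sq (a b c : ℝ) :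
    (a * b + b * c + c * a) ^ 2 + (a ^ 2 - c ^ 2) ^ 2 ≤ (a ^ 2 + b ^ 2 + c ^ 2) ^ 2 := by
  nlinarith [sq_nonneg (a * c - a * b), sq_nonneg (a * c - b ^ 2), sq_nonneg (a * c - b * c)]

theorem abs_sub_add_abs_sub_add_abs_sub_eq (x y z : ℝ) :
    |x - y| + |x - z| + |y - z| = 2 * |x - y| ∨ |x - y| + |x - z| + |y - z| = 2 * |x - z| ∨
      |x - y| + |x - z| + |y - z| = 2 * |y - z| := by
  grind [abs_of_nonneg, abs_of_nonpos]

theorem sq_sum_abs_sub_sq_le (x y z : ℝ) :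
    (|x ^ 2 - y ^ 2| + |x ^ 2 - z ^ 2| + |y ^ 2 - z ^ 2|) ^ 2 ≤
      4 * ((x ^ 2 + y ^ 2 + z ^ 2) ^ 2 - (x * y + x * z + y * z) ^ 2) := by
  have hxy := sq_add_sq_sub_sq_le_sq_sum_sq x z y
  have hxz := sq_add_sq_sub_sq_le_sq_sum_sq x y z
  have hyz := sq_add_sq_sub_sq_le_sq_sum_sq y x z
  rcases abs_sub_add_abs_sub_add_abs_sub_eq (x ^ 2) (y ^ 2) (z ^ 2) with h | h | h <;>
    rw [h, mul_pow, sq_abs] <;> linarith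

section Observables

variable {n : Type*} [Fintype n] [DecidableEq n] {σ : Matrix n n ℂ}

theorem norm_trace_mul_single_add_single (hσ : σ.IsHermitian) (a b : n) :
    ‖(σ * (single a b 1 + single b a 1)).trace‖ = 2 * |(σ a b).re| := by
  have h : (σ * (single a b 1 + single b a 1)).trace = ((2 * (σ a b).re : ℝ) : ℂ) := by
    rw [mul_add, trace_add, trace_mul_single, trace_mul_single, ← hσ.apply b a,
      ← Complex.add_conj]
    simp [add_comm]
  rw [h, Complex.norm_real, Real.norm_eq_abs, abs_mul, abs_two]

theorem norm_trace_mul_single_neg_I_add_single_I (hσ : σ.IsHermitian) (a b : n) :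
    ‖(σ * (single a b (-Complex.I) + single b a Complex.I)).trace‖ = 2 * |(σ a b).im| := by
  have h : (σ * (single a b (-Complex.I) + single b a Complex.I)).trace =
      ((-(2 * (σ a b).im) : ℝ) : ℂ) := by
    rw [mul_add, trace_add, trace_mul_single, trace_mul_single, ← hσ.apply b a, op_smul_eq_mul,
      op_smul_eq_mul, Complex.star_def]
    have hsub := Complex.sub_conj (σ a b)
    push_cast at hsub ⊢
    linear_combination Complex.I * hsub + 2 * (σ a b).im * Complex.I_mul_I
  rw [h, Complex.norm_real, Real.norm_eq_abs, abs_neg, abs_mul, abs_two]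

theorem norm_trace_mul_single_sub_single (hσ : σ.IsHermitian) (a b : n) :
    ‖(σ * (single a a 1 - single b b 1)).trace‖ = |(σ a a).re - (σ b b).re| := by
  have h : (σ * (single a a 1 - single b b 1)).trace = (((σ a a).re - (σ b b).re : ℝ) : ℂ) := by
    rw [mul_sub, trace_sub, trace_mul_single, trace_mul_single, ← hσ.coe_re_apply_self a,
      ← hσ.coe_re_apply_self b]
    simp
  rw [h, Complex.norm_real, Real.norm_eq_abs]

end Observables

def sumNormExpect {ι n : Type*} [Fintype ι] [Fintype n] (A : ι → Matrix n n ℂ)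
    (σ : Matrix n n ℂ) : ℝ :=
  ∑ i, ‖(σ * A i).trace‖

section Separable

variable {ι m n : Type*} [Fintype ι] [Fintype m] [Fintype n] {c : ι → ℝ}
  (ρ₁ : ι → Matrix m m ℂ) (ρ₂ : ι → Matrix n n ℂ)

theorem norm_trace_sum_smul_kronecker_mul_le (hc : ∀ k, 0 ≤ c k)
    (P : Matrix m m ℂ) (Q : Matrix n n ℂ) :
    ‖((∑ k, (c k : ℂ) • (ρ₁ k ⊗ₖ ρ₂ k)) * (P ⊗ₖ Q)).trace‖ ≤
      ∑ k, c k * (‖(ρ₁ k * P).trace‖ * ‖(ρ₂ k * Q).trace‖) := by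
  rw [Finset.sum_mul, trace_sum]
  refine (norm_sum_le _ _).trans (le_of_eq (Finset.sum_congr rfl fun k _ ↦ ?_))
  rw [smul_mul, trace_smul, ← mul_kronecker_mul, trace_kronecker, smul_eq_mul, norm_mul,
    norm_mul, Complex.norm_real, Real.norm_of_nonneg (hc k)]

theorem sum_sum_norm_trace_sum_smul_kronecker_mul_le {κ₁ κ₂ : Type*} [Fintype κ₁] [Fintype κ₂]
    (hc : ∀ k, 0 ≤ c k) (A : κ₁ → Matrix m m ℂ) (B : κ₂ → Matrix n n ℂ) :
    ∑ i, ∑ j, ‖((∑ k, (c k : ℂ) • (ρ₁ k ⊗ₖ ρ₂ k)) * (A i ⊗ₖ B j)).trace‖ ≤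
      ∑ k, c k * (sumNormExpect A (ρ₁ k) * sumNormExpect B (ρ₂ k)) := by
  calc _ ≤ ∑ i, ∑ j, ∑ k, c k * (‖(ρ₁ k * A i).trace‖ * ‖(ρ₂ k * B j).trace‖) := by
        gcongr with i _ j _
        exact norm_trace_sum_smul_kronecker_mul_le ρ₁ ρ₂ hc (A i) (B j)
    _ = _ := by
      simp only [sumNormExpect, Finset.sum_mul_sum]
      simp only [Finset.mul_sum]
      exact (Finset.sum_congr rfl fun i _ ↦ Finset.sum_comm).trans Finset.sum_comm

end Separable

section Qutrit

variable {σ : Matrix (Fin 3) (Fin 3) ℂ}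

theorem sumNormExpect_subX (hσ : σ.IsHermitian) :
    sumNormExpect subX σ = 2 * (|(σ 1 2).re| + |(σ 0 2).re| + |(σ 0 1).re|) := by
  simp only [sumNormExpect, subX, E3, Fin.sum_univ_three, cons_val_zero, cons_val_one, cons_val,
    norm_trace_mul_single_add_single hσ]
  ring

theorem sumNormExpect_subY (hσ : σ.IsHermitian) :
    sumNormExpect subY σ = 2 * (|(σ 1 2).im| + |(σ 0 2).im| + |(σ 0 1).im|) := by
  simp only [sumNormExpect, subY, Fin.sum_univ_three, cons_val_zero, cons_val_one, cons_val,
    norm_trace_mul_single_neg_I_add_single_I hσ]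
  ring

theorem sumNormExpect_subZ (hσ : σ.IsHermitian) :
    sumNormExpect subZ σ = |(σ 1 1).re - (σ 2 2).re| + |(σ 0 0).re - (σ 2 2).re| +
      |(σ 0 0).re - (σ 1 1).re| := by
  simp [sumNormExpect, Fin.sum_univ_three, subZ, E3, norm_trace_mul_single_sub_single hσ]

theorem sumNormExpect_sq_add_le_four (hσ : σ.PosSemidef) (htr : σ.trace = 1) :
    sumNormExpect subX σ ^ 2 + sumNormExpect subY σ ^ 2 + sumNormExpect subZ σ ^ 2 ≤ 4 := by
  set q : Fin 3 → ℝ := fun i ↦ √(σ i i).re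
  have hq : ∀ i, q i ^ 2 = (σ i i).re := fun i ↦
    Real.sq_sqrt (RCLike.nonneg_iff.1 hσ.diag_nonneg).1
  have hsum : q 0 ^ 2 + q 1 ^ 2 + q 2 ^ 2 = 1 := by
    simpa [hq, trace, Fin.sum_univ_three] using congrArg Complex.re htr
  have hoff : (|(σ 1 2).re| + |(σ 0 2).re| + |(σ 0 1).re|) ^ 2 +
      (|(σ 1 2).im| + |(σ 0 2).im| + |(σ 0 1).im|) ^ 2 ≤
        (q 1 * q 2 + q 0 * q 2 + q 0 * q 1) ^ 2 := by
    have h := sq_sum_abs_re_add_sq_sum_abs_im_le Finset.univ ![σ 1 2, σ 0 2, σ 0 1]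
    simp only [Fin.sum_univ_three] at h
    refine h.trans (pow_le_pow_left₀ (by positivity) ?_ 2)
    gcongr <;> exact hσ.norm_apply_le_sqrt_mul_sqrt _ _
  have hdiag := sq_sum_abs_sub_sq_le (q 0) (q 1) (q 2)
  rw [sumNormExpect_subX hσ.1, sumNormExpect_subY hσ.1, sumNormExpect_subZ hσ.1,
    ← hq 0, ← hq 1, ← hq 2]
  nlinarith

theorem sumNormExpect_mul_add_le_four {σ τ : Matrix (Fin 3) (Fin 3) ℂ}
    (hσ : σ.PosSemidef) (hσ₁ : σ.trace = 1) (hτ : τ.PosSemidef) (hτ₁ : τ.trace = 1) :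
    sumNormExpect subX σ * sumNormExpect subX τ + sumNormExpect subY σ * sumNormExpect subY τ +
      sumNormExpect subZ σ * sumNormExpect subZ τ ≤ 4 := by
  nlinarith [sumNormExpect_sq_add_le_four hσ hσ₁, sumNormExpect_sq_add_le_four hτ hτ₁,
    sq_nonneg (sumNormExpect subX σ - sumNormExpect subX τ),
    sq_nonneg (sumNormExpect subY σ - sumNormExpect subY τ),
    sq_nonneg (sumNormExpect subZ σ - sumNormExpect subZ τ)]

end Qutrit

/-- For every separable state ρ on ℂ³ ⊗ ℂ³, the total absolute correlation of the nine
subspace-Pauli pairs is at most 4. -/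
theorem stmt_18 (ρ : Matrix (Fin 3 × Fin 3) (Fin 3 × Fin 3) ℂ)
    (hsep : ∃ (k : ℕ) (c : Fin k → ℝ) (ρ₁ ρ₂ : Fin k → Matrix (Fin 3) (Fin 3) ℂ),
        (∀ j, 0 ≤ c j) ∧ (∑ j, c j) = 1 ∧
        (∀ j, (ρ₁ j).PosSemidef ∧ (ρ₁ j).trace = 1) ∧
        (∀ j, (ρ₂ j).PosSemidef ∧ (ρ₂ j).trace = 1) ∧
        ρ = ∑ j, (c j : ℂ) • (ρ₁ j ⊗ₖ ρ₂ j)) :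
    ∑ i : Fin 3, ∑ j : Fin 3,
        (‖(ρ * (subX i ⊗ₖ subX j)).trace‖ +
          ‖(ρ * (subY i ⊗ₖ subY j)).trace‖ +
          ‖(ρ * (subZ i ⊗ₖ subZ j)).trace‖) ≤ 4 := by
  obtain ⟨n, c, ρ₁, ρ₂, hc, hc₁, h₁, h₂, rfl⟩ := hsep
  simp only [Finset.sum_add_distrib]
  have hX := sum_sum_norm_trace_sum_smul_kronecker_mul_le ρ₁ ρ₂ hc subX subX
  have hY := sum_sum_norm_trace_sum_smul_kronecker_mul_le ρ₁ ρ₂ hc subY subY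
  have hZ := sum_sum_norm_trace_sum_smul_kronecker_mul_le ρ₁ ρ₂ hc subZ subZ
  calc _ ≤ ∑ k, c k * (sumNormExpect subX (ρ₁ k) * sumNormExpect subX (ρ₂ k) +
          sumNormExpect subY (ρ₁ k) * sumNormExpect subY (ρ₂ k) +
          sumNormExpect subZ (ρ₁ k) * sumNormExpect subZ (ρ₂ k)) := by
        simp only [mul_add, Finset.sum_add_distrib]
        exact add_le_add (add_le_add hX hY) hZ
    _ ≤ ∑ k, c k * 4 := by
        gcongr with k
        · exact hc k
        · exact sumNormExpect_mul_add_le_four (h₁ k).1 (h₁ k).2 (h₂ k).1 (h₂ k).2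
    _ = 4 := by rw [← Finset.sum_mul, hc₁, one_mul]

end
end
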